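/- For any real constant c, on the open set where D := 1 + 4cy - 2cxz ≠ 0, the transformation x̃ = x/D, ỹ = (y + 4cy^2 - 4cxyz + cx^2z^2)/D^2, z̃ = z/D satisfies dỹ - z̃ dx̃ = λ·(dy - z dx) for some nonvanishing smooth function λ. -/

import Mathlib

/-- The contact form ω = dy - z dx, evaluated at point `p` on tangent vector `v`. -/
def omegaForm (p v : ℝ × ℝ × ℝ) : ℝ := v.2.1 - p.2.2 * v.1

/-- The denominator D = 1 + 4cy - 2cxz. -/
def Dfun (c : ℝ) (p : ℝ × ℝ × ℝ) : ℝ := 1 + 4 * c * p.2.1 - 2 * c * p.1 * p.2.2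

/-- The contact transformation generated by H = 4xyz - 4y² - x²z². -/
noncomputable def Phi (c : ℝ) (p : ℝ × ℝ × ℝ) : ℝ × ℝ × ℝ :=
  (p.1 / Dfun c p,
   (p.2.1 + 4 * c * p.2.1 ^ 2 - 4 * c * p.1 * p.2.1 * p.2.2 + c * p.1 ^ 2 * p.2.2 ^ 2) /
     (Dfun c p) ^ 2,
   p.2.2 / Dfun c p)

theorem stmt10 (c : ℝ) :
    ∃ lam : ℝ × ℝ × ℝ → ℝ,
      ContDiffOn ℝ (⊤ : ℕ∞) lam {p : ℝ × ℝ × ℝ | Dfun c p ≠ 0} ∧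
      (∀ p : ℝ × ℝ × ℝ, Dfun c p ≠ 0 → lam p ≠ 0) ∧
      (∀ p : ℝ × ℝ × ℝ, Dfun c p ≠ 0 → ∀ v : ℝ × ℝ × ℝ,
        omegaForm (Phi c p) (fderiv ℝ (Phi c) p v) = lam p * omegaForm p v) := by
  refine ⟨fun p => ((Dfun c p) ^ 2)⁻¹, ?_, ?_, ?_⟩
  · have hD : ContDiff ℝ (⊤ : ℕ∞) (Dfun c) := by unfold Dfun; fun_prop
    exact ((hD.pow 2).contDiffOn).inv (fun p hp => pow_ne_zero 2 hp)
  · intro p hp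
    exact inv_ne_zero (pow_ne_zero 2 hp)
  · intro p hD0 v
    set g : ℝ × ℝ × ℝ → ℝ × ℝ × ℝ := fun q =>
      (q.1 * (Dfun c q)⁻¹,
       ((q.2.1 + 4 * c * (q.2.1 * q.2.1) - 4 * c * (q.1 * (q.2.1 * q.2.2)) +
          c * ((q.1 * q.1) * (q.2.2 * q.2.2))) * ((Dfun c q)⁻¹ * (Dfun c q)⁻¹),
       q.2.2 * (Dfun c q)⁻¹)) with hgdef
    have hPhig : Phi c = g := by
      funext q
      simp only [Phi, g, div_eq_mul_inv, pow_two, mul_inv]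
      norm_num
      exact Or.inl (by ring)
    have hx : HasFDerivAt (fun q : ℝ × ℝ × ℝ => q.1)
        (ContinuousLinearMap.fst ℝ ℝ (ℝ × ℝ)) p := hasFDerivAt_fst
    have hy : HasFDerivAt (fun q : ℝ × ℝ × ℝ => q.2.1)
        ((ContinuousLinearMap.fst ℝ ℝ ℝ).comp (ContinuousLinearMap.snd ℝ ℝ (ℝ × ℝ))) p :=
      hasFDerivAt_fst.comp p hasFDerivAt_snd
    have hz : HasFDerivAt (fun q : ℝ × ℝ × ℝ => q.2.2)
        ((ContinuousLinearMap.snd ℝ ℝ ℝ).comp (ContinuousLinearMap.snd ℝ ℝ (ℝ × ℝ))) p :=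
      hasFDerivAt_snd.comp p hasFDerivAt_snd
    have hD : HasFDerivAt (Dfun c) _ p :=
      ((hasFDerivAt_const (1:ℝ) p).add (hy.const_mul (4*c))).sub ((hx.const_mul (2*c)).mul hz)
    have hDinv : HasFDerivAt (fun q => (Dfun c q)⁻¹) _ p :=
      (hasDerivAt_inv hD0).comp_hasFDerivAt p hD
    have hN : HasFDerivAt (fun q : ℝ × ℝ × ℝ =>
        q.2.1 + 4 * c * (q.2.1 * q.2.1) - 4 * c * (q.1 * (q.2.1 * q.2.2)) +
          c * ((q.1 * q.1) * (q.2.2 * q.2.2))) _ p :=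
      ((hy.add ((hy.mul hy).const_mul (4*c))).sub ((hx.mul (hy.mul hz)).const_mul (4*c))).add
        (((hx.mul hx).mul (hz.mul hz)).const_mul c)
    have hg : HasFDerivAt g _ p :=
      HasFDerivAt.prodMk (hx.mul hDinv) (HasFDerivAt.prodMk (hN.mul (hDinv.mul hDinv)) (hz.mul hDinv))
    rw [hPhig, hg.fderiv]
    obtain ⟨X, Y, Z⟩ := p
    obtain ⟨a, b, d⟩ := v
    simp only [omegaForm, g, Dfun, ContinuousLinearMap.prod_apply, ContinuousLinearMap.add_apply,
      ContinuousLinearMap.sub_apply, ContinuousLinearMap.smul_apply,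
      ContinuousLinearMap.comp_apply, ContinuousLinearMap.coe_fst', ContinuousLinearMap.coe_snd',
      ContinuousLinearMap.zero_apply, smul_eq_mul, ContinuousLinearMap.coe_smul',
      Pi.smul_apply, Pi.mul_apply]
    have hD0' : (1 + 4 * c * Y - 2 * c * X * Z) ≠ 0 := hD0
    generalize hDD : (1 + 4 * c * Y - 2 * c * X * Z) = D at hD0' ⊢
    field_simp
    subst hDD
    ring
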